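/- An l-valued language A : Σ* → l is l-regular if and only if the image set Im(A) is finite, for every r ∈ Im(A)∖{0} the cut A_r = { ω ∈ Σ* : A(ω) ≥ r } is a (classical) regular language, and A = ⋁_{r ∈ Im(A)∖{0}} r·1_{A_r}. -/

import Mathlib

/-- A complete orthomodular lattice. -/
class OrthomodularCompleteLattice (α : Type*) extends CompleteLattice α, Compl α where
  inf_compl_self : ∀ a : α, a ⊓ aᶜ = ⊥
  sup_compl_self : ∀ a : α, a ⊔ aᶜ = ⊤
  compl_compl' : ∀ a : α, aᶜᶜ = a
  compl_antitone : ∀ a b : α, a ≤ b → bᶜ ≤ aᶜ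
  orthomodular : ∀ a b : α, a ≤ b → b = a ⊔ (aᶜ ⊓ b)

/-- An `l`-valued finite automaton (`l`-VFA). -/
structure LVFA (Q A l : Type*) where
  δ : Q → A → Q → l
  init : Q → l
  final : Q → l

/-- The `l`-valued language recognized by an `l`-VFA. -/
def lvfaLang {Q A l : Type*} [OrthomodularCompleteLattice l] (M : LVFA Q A l)
    (w : List A) : l :=
  ⨆ path : Fin (w.length + 1) → Q,
    M.init (path 0) ⊓
      (⨅ i : Fin w.length, M.δ (path i.castSucc) (w.get i) (path i.succ)) ⊓
      M.final (path (Fin.last w.length))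

/-- An `l`-valued deterministic finite automaton (`l`-VDFA). -/
structure LVDFA (Q A l : Type*) where
  next : Q → A → Q
  start : Q
  final : Q → l

/-- The `l`-valued language recognized by an `l`-VDFA. -/
def lvdfaLang {Q A l : Type*} (M : LVDFA Q A l) (w : List A) : l :=
  M.final (w.foldl M.next M.start)

/-- An `l`-valued finite automaton with ε-moves (`ε` is encoded as `none`). -/
structure LVFAe (Q A l : Type*) where
  δ : Q → Option A → Q → l
  init : Q → l
  final : Q → l

/-- The `l`-valued language recognized by an `l`-VFA with ε-moves. -/
def lvfaeLang {Q A l : Type*} [OrthomodularCompleteLattice l] (M : LVFAe Q A l)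
    (w : List A) : l :=
  ⨆ n : ℕ, ⨆ τ : Fin n → Option A, ⨆ _ : (List.ofFn τ).reduceOption = w,
    ⨆ path : Fin (n + 1) → Q,
      M.init (path 0) ⊓
        (⨅ i : Fin n, M.δ (path i.castSucc) (τ i) (path i.succ)) ⊓
        M.final (path (Fin.last n))

/-- An `l`-valued language is `l`-regular if it is recognized by some `l`-VFA. -/
def IsLRegular {A l : Type*} [OrthomodularCompleteLattice l] (f : List A → l) : Prop :=
  ∃ (Q : Type) (_ : Fintype Q) (M : LVFA Q A l), ∀ w, lvfaLang M w = f w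

/-!
An `l`-VFA is determinized by a weighted subset construction: a state records the pairs
`(q, v)` with `v` the weight of some path to `q`. Every such `v` is a meet of finitely many
initial and transition weights, so only finitely many states are reachable, and the language
of a finite deterministic machine has finite image and regular cuts. Conversely, `f w` is the
join of the nonzero values `r` of `f` whose cut contains `w`, which the product of DFAs for the
finitely many cuts computes; a deterministic machine is an `l`-VFA with `⊤`/`⊥` transitions.
-/

namespace LVDFA

variable {σ τ A l : Type*}

theorem lvdfaLang_eq_of_simulation (N : LVDFA σ A l) (N' : LVDFA τ A l) (R : σ → τ → Prop)
    (hstart : R N.start N'.start) (hnext : ∀ s t a, R s t → R (N.next s a) (N'.next t a))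
    (hfinal : ∀ s t, R s t → N.final s = N'.final t) :
    lvdfaLang N = lvdfaLang N' := by
  have hrun : ∀ (w : List A) s t, R s t → R (w.foldl N.next s) (w.foldl N'.next t) := by
    intro w
    induction w with
    | nil => exact fun _ _ h => h
    | cons a w ih => exact fun s t h => ih _ _ (hnext s t a h)
  exact funext fun w => hfinal _ _ (hrun w _ _ hstart)

def restrict (N : LVDFA σ A l) (R : Set σ) (hstart : N.start ∈ R)
    (hnext : ∀ s ∈ R, ∀ a, N.next s a ∈ R) : LVDFA R A l where
  next s a := ⟨N.next s a, hnext s s.2 a⟩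
  start := ⟨N.start, hstart⟩
  final s := N.final s

theorem lvdfaLang_restrict (N : LVDFA σ A l) (R : Set σ) (hstart : N.start ∈ R)
    (hnext : ∀ s ∈ R, ∀ a, N.next s a ∈ R) :
    lvdfaLang (N.restrict R hstart hnext) = lvdfaLang N :=
  lvdfaLang_eq_of_simulation _ _ (fun s t => (s : σ) = t) rfl
    (fun _ _ _ h => by simp [restrict, h]) (fun _ _ h => by simp [restrict, h])

def reindex (N : LVDFA σ A l) (e : σ ≃ τ) : LVDFA τ A l where
  next t a := e (N.next (e.symm t) a)
  start := e N.start
  final t := N.final (e.symm t)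

theorem lvdfaLang_reindex (N : LVDFA σ A l) (e : σ ≃ τ) :
    lvdfaLang (N.reindex e) = lvdfaLang N :=
  lvdfaLang_eq_of_simulation _ _ (fun t s => t = e s) rfl
    (fun _ _ _ h => by simp [reindex, h]) (fun _ _ h => by simp [reindex, h])

theorem finite_range_lvdfaLang [Finite σ] (N : LVDFA σ A l) :
    (Set.range (lvdfaLang N)).Finite :=
  (Set.finite_range N.final).subset (Set.range_comp_subset_range _ N.final)

theorem isRegular_setOf_lvdfaLang [Finite σ] (N : LVDFA σ A l) (p : l → Prop) :
    Language.IsRegular {w : List A | p (lvdfaLang N w)} :=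
  Language.isRegular_iff.2 ⟨σ, Fintype.ofFinite σ, ⟨N.next, N.start, {s | p (N.final s)}⟩, rfl⟩

def weightedProd [CompleteLattice l] {ι : Type*} {σ : ι → Type*} (D : ∀ i, DFA A (σ i))
    (c : ι → l) : LVDFA (∀ i, σ i) A l where
  next s a i := (D i).step (s i) a
  start i := (D i).start
  final s := ⨆ i, ⨆ _ : s i ∈ (D i).accept, c i

theorem lvdfaLang_weightedProd [CompleteLattice l] {ι : Type*} {σ : ι → Type*}
    (D : ∀ i, DFA A (σ i)) (c : ι → l) (w : List A) :
    lvdfaLang (weightedProd D c) w = ⨆ i, ⨆ _ : w ∈ (D i).accepts, c i := by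
  have hrun : ∀ i, (w.foldl (weightedProd D c).next (weightedProd D c).start) i = (D i).eval w :=
    fun i => (List.foldl_hom (fun s : ∀ i, σ i => s i) fun _ _ => rfl).symm
  simp only [lvdfaLang, weightedProd, DFA.mem_accepts] at hrun ⊢
  simp only [hrun]

end LVDFA

universe u v

theorem Fin.iInf_succ {α : Type*} [CompleteLattice α] {n : ℕ} (g : Fin (n + 1) → α) :
    ⨅ i, g i = g 0 ⊓ ⨅ i : Fin n, g i.succ := by
  rw [← (finSuccEquiv n).symm.iInf_comp, iInf_option]
  simp

namespace LVFA

variable {Q : Type u} {A : Type*} {l : Type v} [OrthomodularCompleteLattice l] (M : LVFA Q A l)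

def weight (w : List A) (path : Fin (w.length + 1) → Q) : l :=
  ⨅ i : Fin w.length, M.δ (path i.castSucc) (w.get i) (path i.succ)

theorem weight_cons (a : A) (w : List A) (q : Q) (path : Fin (w.length + 1) → Q) :
    M.weight (a :: w) (Fin.cons q path) = M.δ q a (path 0) ⊓ M.weight w path := by
  refine (Fin.iInf_succ (n := w.length) _).trans ?_
  simp [weight]

/-- Weighted subset construction: a state holds a pair `(q, v)` for every path to `q`, `v` being its
weight. Keeping a single value per state would need `⊓` to distribute over `⨆`, which fails in
`l`. -/
def toPowerset : LVDFA (Set (Q × l)) A l where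
  next S a := {p | ∃ x ∈ S, p.2 = x.2 ⊓ M.δ x.1 a p.1}
  start := {p | p.2 = M.init p.1}
  final S := ⨆ p ∈ S, p.2 ⊓ M.final p.1

theorem mem_foldl_toPowerset_next (w : List A) (S : Set (Q × l)) (p : Q × l) :
    p ∈ w.foldl M.toPowerset.next S ↔ ∃ (path : Fin (w.length + 1) → Q) (v : l),
      (path 0, v) ∈ S ∧ path (Fin.last _) = p.1 ∧ p.2 = v ⊓ M.weight w path := by
  induction w generalizing S with
  | nil =>
    refine ⟨fun hp => ⟨fun _ => p.1, p.2, by simpa [weight] using hp⟩, ?_⟩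
    rintro ⟨path, v, hv, hlast, hp⟩
    have hpath : (path 0, v) = p := Prod.ext hlast (by simpa [weight] using hp.symm)
    simpa [← hpath] using hv
  | cons a w ih =>
    rw [List.foldl_cons, ih]
    conv_rhs => rw [Fin.exists_fin_succ_pi]
    constructor
    · rintro ⟨path, v, ⟨x, hx, hv⟩, hlast, hp⟩
      refine ⟨x.1, path, x.2, hx, by simpa using hlast, ?_⟩
      rw [hp, show v = _ from hv, weight_cons, inf_assoc]
    · rintro ⟨q, path, v, hv, hlast, hp⟩
      refine ⟨path, v ⊓ M.δ q a (path 0), ⟨(q, v), hv, rfl⟩, by simpa using hlast, ?_⟩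
      rw [hp, weight_cons, inf_assoc]

theorem lvdfaLang_toPowerset : lvdfaLang M.toPowerset = lvfaLang M := by
  funext w
  change _ = ⨆ path, M.init (path 0) ⊓ M.weight w path ⊓ M.final (path (Fin.last _))
  apply le_antisymm
  · refine iSup₂_le fun p hp => ?_
    obtain ⟨path, v, hv, hlast, hp⟩ := (M.mem_foldl_toPowerset_next w _ p).1 hp
    refine le_iSup_of_le path (le_of_eq ?_)
    rw [hp, show v = _ from hv, hlast]
  · exact iSup_le fun path => le_iSup₂_of_le (path (Fin.last _), M.init (path 0) ⊓ M.weight w path)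
      ((M.mem_foldl_toPowerset_next w _ _).2 ⟨path, M.init (path 0), rfl, rfl, rfl⟩) le_rfl

def weights : Set l :=
  sInf '' {s | s ⊆ Set.range M.init ∪ Set.range fun x : Q × A × Q => M.δ x.1 x.2.1 x.2.2}

theorem finite_weights [Finite Q] [Finite A] : M.weights.Finite :=
  ((Set.finite_range _).union (Set.finite_range _)).finite_subsets.image _

theorem exists_finite_lvdfa [Finite Q] [Finite A] :
    ∃ (σ : Type (max u v)) (_ : Finite σ) (N : LVDFA σ A l), lvdfaLang N = lvfaLang M := by
  let R : Set (Set (Q × l)) := {S | S ⊆ Set.univ ×ˢ M.weights}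
  have hstart : M.toPowerset.start ∈ R := fun p hp =>
    ⟨trivial, {M.init p.1}, Set.singleton_subset_iff.2 (Or.inl ⟨_, rfl⟩), by
      rw [sInf_singleton]; exact (show p.2 = _ from hp).symm⟩
  have hnext : ∀ S ∈ R, ∀ a, M.toPowerset.next S a ∈ R := by
    rintro S hS a p ⟨x, hx, hp⟩
    obtain ⟨s, hs, hsx⟩ := (hS hx).2
    refine ⟨trivial, insert (M.δ x.1 a p.1) s,
      Set.insert_subset (Or.inr ⟨(x.1, a, p.1), rfl⟩) hs, ?_⟩
    rw [sInf_insert, hsx, hp, inf_comm]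
  have : Finite R := (Set.finite_univ.prod M.finite_weights).finite_subsets.to_subtype
  exact ⟨R, this, M.toPowerset.restrict R hstart hnext,
    by rw [LVDFA.lvdfaLang_restrict, lvdfaLang_toPowerset]⟩

end LVFA

namespace LVDFA

variable {σ : Type*} {A : Type*} {l : Type*} [OrthomodularCompleteLattice l]

def toLVFA [DecidableEq σ] (N : LVDFA σ A l) : LVFA σ A l where
  δ s a t := if t = N.next s a then ⊤ else ⊥
  init s := if s = N.start then ⊤ else ⊥
  final := N.final

theorem lvfaLang_toLVFA [DecidableEq σ] (N : LVDFA σ A l) : lvfaLang N.toLVFA = lvdfaLang N := by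
  rw [← N.toLVFA.lvdfaLang_toPowerset]
  refine lvdfaLang_eq_of_simulation _ _ (fun S s => (s, ⊤) ∈ S ∧ ∀ p ∈ S, p.2 = ⊥ ∨ p = (s, ⊤))
    ⟨by simp [LVFA.toPowerset, toLVFA], ?_⟩ ?_ ?_
  · intro p hp
    change p.2 = if p.1 = N.start then ⊤ else ⊥ at hp
    split_ifs at hp with h
    · exact Or.inr (Prod.ext h hp)
    · exact Or.inl hp
  · rintro S s a ⟨hs, hS⟩
    refine ⟨⟨(s, ⊤), hs, by simp [toLVFA]⟩, ?_⟩
    rintro p ⟨x, hx, hp⟩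
    rcases hS x hx with hx | rfl
    · exact Or.inl (by rw [hp, hx, bot_inf_eq])
    · change p.2 = ⊤ ⊓ (if p.1 = N.next s a then ⊤ else ⊥) at hp
      split_ifs at hp with h
      · exact Or.inr (Prod.ext h (by simpa using hp))
      · exact Or.inl (by simpa using hp)
  · rintro S s ⟨hs, hS⟩
    refine le_antisymm (iSup₂_le fun p hp => ?_) (le_iSup₂_of_le (s, ⊤) hs (by simp [toLVFA]))
    rcases hS p hp with h | rfl
    · simp [h]
    · simp [toLVFA]

theorem isLRegular_lvdfaLang [Finite σ] (N : LVDFA σ A l) : IsLRegular (lvdfaLang N) :=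
  ⟨Fin (Nat.card σ), inferInstance, (N.reindex (Finite.equivFin σ)).toLVFA,
    fun w => by rw [lvfaLang_toLVFA, lvdfaLang_reindex]⟩

end LVDFA

theorem iSup_range_ne_bot_le_eq {α l : Type*} [CompleteLattice l] (f : α → l) (x : α) :
    ⨆ r ∈ Set.range f, ⨆ _ : r ≠ ⊥, ⨆ _ : r ≤ f x, r = f x := by
  refine le_antisymm (iSup₂_le fun r _ => iSup₂_le fun _ h => h) ?_
  by_cases hx : f x = ⊥
  · rw [hx]
    exact bot_le
  · exact le_iSup₂_of_le (f x) ⟨x, rfl⟩ (le_iSup₂_of_le hx le_rfl le_rfl)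

theorem isLRegular_of_isRegular_cuts {A l : Type*} [OrthomodularCompleteLattice l]
    (f : List A → l) (hfin : (Set.range f).Finite)
    (hreg : ∀ r ∈ Set.range f, r ≠ ⊥ → Language.IsRegular {w : List A | r ≤ f w}) :
    IsLRegular f := by
  let ι := {r : l // r ∈ Set.range f ∧ r ≠ ⊥}
  have : Finite ι := (hfin.subset fun _ h => h.1).to_subtype
  choose σ _ D hD using fun r : ι => hreg r.1 r.2.1 r.2.2
  have hf : lvdfaLang (LVDFA.weightedProd D Subtype.val) = f := by
    funext w
    rw [LVDFA.lvdfaLang_weightedProd]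
    conv_rhs => rw [← iSup_range_ne_bot_le_eq f w]
    simp only [hD]
    rw [iSup_subtype]
    simp only [iSup_and]
    rfl
  exact hf ▸ LVDFA.isLRegular_lvdfaLang _

/-- Cut characterization of `l`-regular languages. -/
theorem lregular_iff_cuts {l A : Type*} [OrthomodularCompleteLattice l] [Fintype A]
    (f : List A → l) :
    IsLRegular f ↔
      (Set.range f).Finite ∧
      (∀ r ∈ Set.range f, r ≠ ⊥ → Language.IsRegular {w : List A | r ≤ f w}) ∧
      ∀ w : List A, f w = ⨆ r ∈ Set.range f, ⨆ _ : r ≠ ⊥, ⨆ _ : r ≤ f w, r := by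
  constructor
  · rintro ⟨Q, _, M, hM⟩
    obtain ⟨σ, _, N, hN⟩ := M.exists_finite_lvdfa
    obtain rfl : lvdfaLang N = f := hN.trans (funext hM)
    exact ⟨N.finite_range_lvdfaLang, fun r _ _ => N.isRegular_setOf_lvdfaLang (r ≤ ·),
      fun w => (iSup_range_ne_bot_le_eq _ w).symm⟩
  · exact fun ⟨hfin, hreg, _⟩ => isLRegular_of_isRegular_cuts f hfin hreg
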